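/- Let X be a vector lattice with X~ separating points of X such that the canonical image of X is a regular sublattice of X~~. Then X has the b-property if and only if for every net x_α in X, x_α order converges to 0 in X whenever x̂_α order converges to 0 in X~~. -/

import Mathlib

set_option linter.unusedSectionVars false
set_option maxHeartbeats 1000000

open Filter Set

section ODual

variable (E : Type*) [AddCommGroup E] [Preorder E] [Module ℝ E]

/-- The order (bounded) dual: linear functionals bounded on order intervals. -/
noncomputable def obDual : Submodule ℝ (E →ₗ[ℝ] ℝ) where
  carrier := {f | ∀ w : E, ∃ M : ℝ, ∀ x : E, -w ≤ x → x ≤ w → |f x| ≤ M}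
  zero_mem' := fun w => ⟨0, fun x _ _ => by simp⟩
  add_mem' := fun {f g} hf hg w => by
    obtain ⟨M, hM⟩ := hf w
    obtain ⟨N, hN⟩ := hg w
    refine ⟨M + N, fun x h1 h2 => ?_⟩
    calc |(f + g) x| = |f x + g x| := by simp
    _ ≤ |f x| + |g x| := abs_add_le _ _
    _ ≤ M + N := add_le_add (hM x h1 h2) (hN x h1 h2)
  smul_mem' := fun c f hf => by
    intro w
    obtain ⟨M, hM⟩ := hf w
    refine ⟨|c| * M, fun x h1 h2 => ?_⟩
    calc |(c • f) x| = |c| * |f x| := by simp [abs_mul]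
    _ ≤ |c| * M := mul_le_mul_of_nonneg_left (hM x h1 h2) (abs_nonneg c)

/-- The pointwise-on-positive-elements (pre)order on a space of functionals. -/
instance instSubPre (Y : Submodule ℝ (E →ₗ[ℝ] ℝ)) : Preorder Y where
  le f g := ∀ x : E, 0 ≤ x → (f : E →ₗ[ℝ] ℝ) x ≤ (g : E →ₗ[ℝ] ℝ) x
  le_refl f x _ := le_rfl
  le_trans f g h h1 h2 x hx := (h1 x hx).trans (h2 x hx)

variable {E}

theorem subPre_le_iff {Y : Submodule ℝ (E →ₗ[ℝ] ℝ)} {f g : Y} :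
    f ≤ g ↔ ∀ x : E, 0 ≤ x → (f : E →ₗ[ℝ] ℝ) x ≤ (g : E →ₗ[ℝ] ℝ) x := Iff.rfl

/-- Order convergence of a net to a limit (sandwich form: eventually
`l - d ≤ x_α ≤ l + d` for every `d` in a set directed downward to `0`). -/
def OConvTo {ι : Type*} [Preorder ι] (x : ι → E) (l : E) : Prop :=
  ∃ D : Set E, D.Nonempty ∧ DirectedOn (· ≥ ·) D ∧ IsGLB D 0 ∧
    ∀ d ∈ D, ∃ α₀ : ι, ∀ α, α₀ ≤ α → l - d ≤ x α ∧ x α ≤ l + d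

/-- Order continuity of a linear functional: `f(x_α) → 0` whenever `x_α ↓ 0`. -/
def OrdContE (f : E →ₗ[ℝ] ℝ) : Prop :=
  ∀ D : Set E, D.Nonempty → DirectedOn (· ≥ ·) D → IsGLB D 0 →
    ∀ ε : ℝ, 0 < ε → ∃ d ∈ D, ∀ e ∈ D, e ≤ d → |f e| < ε

end ODual

section VL

variable (X : Type*) [Lattice X] [AddCommGroup X]
  [CovariantClass X X (· + ·) (· ≤ ·)] [Module ℝ X] [PosSMulMono ℝ X]

variable {X} in
/-- Unbounded order convergence: `|x_α - l| ⊓ u →o 0` for every `u ≥ 0`. -/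
def uoConvTo {ι : Type*} [Preorder ι] (x : ι → X) (l : X) : Prop :=
  ∀ u : X, 0 ≤ u → OConvTo (fun α => |x α - l| ⊓ u) (0 : X)

/-- The canonical evaluation of `x ∈ X` on a space `Y` of functionals on `X`. -/
def hatFun (Y : Submodule ℝ (X →ₗ[ℝ] ℝ)) (x : X) : Y →ₗ[ℝ] ℝ where
  toFun f := (f : X →ₗ[ℝ] ℝ) x
  map_add' f g := by simp
  map_smul' c f := by simp

theorem hatFun_mem (Y : Submodule ℝ (X →ₗ[ℝ] ℝ)) (x : X) :
    hatFun X Y x ∈ obDual Y := by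
  intro w
  refine ⟨(w : X →ₗ[ℝ] ℝ) (x⁺) + (w : X →ₗ[ℝ] ℝ) (x⁻), fun f h1 h2 => ?_⟩
  have hp : (0 : X) ≤ x⁺ := posPart_nonneg x
  have hn : (0 : X) ≤ x⁻ := negPart_nonneg x
  have e1 := (subPre_le_iff.mp h1) _ hp
  have e2 := (subPre_le_iff.mp h2) _ hp
  have e3 := (subPre_le_iff.mp h1) _ hn
  have e4 := (subPre_le_iff.mp h2) _ hn
  have c1 : -((w : X →ₗ[ℝ] ℝ) (x⁺)) ≤ (f : X →ₗ[ℝ] ℝ) (x⁺) := by simpa using e1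
  have c3 : -((w : X →ₗ[ℝ] ℝ) (x⁻)) ≤ (f : X →ₗ[ℝ] ℝ) (x⁻) := by simpa using e3
  have key : (f : X →ₗ[ℝ] ℝ) x
      = (f : X →ₗ[ℝ] ℝ) (x⁺) - (f : X →ₗ[ℝ] ℝ) (x⁻) := by
    rw [← map_sub, posPart_sub_negPart]
  show |(f : X →ₗ[ℝ] ℝ) x| ≤ _
  rw [key]
  have a1 : |(f : X →ₗ[ℝ] ℝ) (x⁺)| ≤ (w : X →ₗ[ℝ] ℝ) (x⁺) := abs_le.mpr ⟨c1, e2⟩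
  have a2 : |(f : X →ₗ[ℝ] ℝ) (x⁻)| ≤ (w : X →ₗ[ℝ] ℝ) (x⁻) := abs_le.mpr ⟨c3, e4⟩
  have := abs_sub ((f : X →ₗ[ℝ] ℝ) (x⁺)) ((f : X →ₗ[ℝ] ℝ) (x⁻))
  linarith

/-- The canonical embedding of `X` into the order dual of `Y ⊆ X~`. -/
def hatEl (Y : Submodule ℝ (X →ₗ[ℝ] ℝ)) (x : X) : obDual Y :=
  ⟨hatFun X Y x, hatFun_mem X Y x⟩

/-- The order of `X~~` (instance search no longer finds `instSubPre` here). -/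
noncomputable instance instSubPreBidual : Preorder (obDual (obDual X)) :=
  instSubPre (obDual X) (obDual (obDual X))

/-- `X~` separates the points of `X`. -/
def SepPoints : Prop := ∀ x : X, x ≠ 0 → ∃ f : obDual X, (f : X →ₗ[ℝ] ℝ) x ≠ 0

/-- The canonical image of `X` in `X~~` is a regular sublattice:
`x_α ↓ 0` in `X` implies `x̂_α ↓ 0` in `X~~`. -/
def HatRegular : Prop :=
  ∀ D : Set X, D.Nonempty → DirectedOn (· ≥ ·) D → IsGLB D 0 →
    IsGLB (hatEl X (obDual X) '' D) (0 : obDual ↥(obDual X))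

variable {X} in
/-- The net `x̂_α` is eventually order bounded in `X~~`. -/
def HatEvOB {ι : Type*} [Preorder ι] (x : ι → X) : Prop :=
  ∃ (b t : obDual ↥(obDual X)) (α₀ : ι), ∀ α, α₀ ≤ α →
    b ≤ hatEl X (obDual X) (x α) ∧ hatEl X (obDual X) (x α) ≤ t

variable {X} in
/-- Bidual bounded uo-convergence. -/
def bbuoConvTo {ι : Type*} [Preorder ι] (x : ι → X) (l : X) : Prop :=
  uoConvTo x l ∧ HatEvOB x

/-- `X` has the `b`-property: every subset of `X` whose canonical image is
order bounded in `X~~` is order bounded in `X`. -/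
def HasBProp : Prop :=
  ∀ A : Set X,
    (∃ b t : obDual ↥(obDual X), ∀ a ∈ A,
        b ≤ hatEl X (obDual X) a ∧ hatEl X (obDual X) a ≤ t) →
    ∃ b t : X, ∀ a ∈ A, b ≤ a ∧ a ≤ t

/-- The Archimedean property for a lattice-ordered group. -/
def IsArch : Prop := ∀ x y : X, 0 ≤ x → (∀ n : ℕ, n • x ≤ y) → x = 0

end VL

/-!
(⇐) If `Â ⊆ [b, t]` in `X~~`, fix `a₀ ∈ A` and index the net `(a - a₀) / (n + 1)` by
`ℕ ×ₗ A`. Its image is squeezed between `∓(t - b) / (n + 1) ↓ 0`, so it order converges in `X`;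
a single element `d` of the dominating family then gives `A ⊆ [a₀ - c d, a₀ + c d]`.

(⇒) If `-d ≤ x̂_α ≤ d` eventually, the `b`-property bounds the tails of `|x_α|` in `X`, so the
eventual upper bounds of `|x_α|` form a nonempty set directed downward, and it remains to show
that `0 ≤ z ≤ u` for all such `u` forces `z = 0`. For each `d`, the set `S = {s | ŝ ≤ d}` is
closed under `⊔` (split a positive `h` as `h' + (h - h')` with `h' (b - a) = h (b - a)⁺`, by
Hahn–Banach) and contains the tail of `|x_α|`. Because `X` is Archimedean, `(z - s)⁺ ↓ 0` along
`S`, regularity transfers this to `X~~`, and `ẑ - d ≤ ((z - s)⁺)^` then gives `ẑ ≤ d`. Hence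
`ẑ ≤ 0`, every positive functional vanishes at `z`, and since each `f ∈ X~` is dominated at `z`
by a positive one (Riesz–Kantorovich, again via Hahn–Banach), separation gives `z = 0`.
-/

theorem posPart_smul_of_nonneg {X : Type*} [Lattice X] [AddCommGroup X] [Module ℝ X]
    [PosSMulMono ℝ X] {c : ℝ} (hc : 0 ≤ c) (a : X) : (c • a)⁺ = c • a⁺ := by
  rcases hc.eq_or_lt with rfl | hc
  · simp
  · have h := (OrderIso.smulRight hc (β := X)).map_sup a 0
    simp only [OrderIso.smulRight_apply, smul_zero] at h
    rw [posPart_def, posPart_def, h]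

section Functionals

variable {E : Type*} [AddCommGroup E] [Preorder E] [Module ℝ E] {Y : Submodule ℝ (E →ₗ[ℝ] ℝ)}

theorem subPre_nonneg_iff {f : Y} : 0 ≤ f ↔ ∀ x : E, 0 ≤ x → 0 ≤ (f : E →ₗ[ℝ] ℝ) x := by
  simp [subPre_le_iff]

theorem subPre_sub_nonneg {f g : Y} : 0 ≤ g - f ↔ f ≤ g := by
  simp [subPre_le_iff]

theorem oConvTo_zero_of_le_inv_succ_smul {κ : Type*} [Preorder κ] {y : κ → Y} {w : Y}
    (hw : 0 ≤ w) (π : κ → ℕ) (hπ : ∀ n, ∃ α₀, ∀ α, α₀ ≤ α → n ≤ π α)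
    (hy : ∀ α, -(((π α : ℝ) + 1)⁻¹ • w) ≤ y α ∧ y α ≤ ((π α : ℝ) + 1)⁻¹ • w) :
    OConvTo y 0 := by
  have hw' : ∀ h : E, 0 ≤ h → 0 ≤ (w : E →ₗ[ℝ] ℝ) h := subPre_nonneg_iff.mp hw
  have hanti : ∀ {n m : ℕ}, n ≤ m → ∀ h : E, 0 ≤ h →
      ((m : ℝ) + 1)⁻¹ * (w : E →ₗ[ℝ] ℝ) h ≤ ((n : ℝ) + 1)⁻¹ * (w : E →ₗ[ℝ] ℝ) h := by
    intro n m hnm h hh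
    have := hw' h hh
    gcongr
  refine ⟨range fun n : ℕ => ((n : ℝ) + 1)⁻¹ • w, ⟨_, 0, rfl⟩, ?_, ⟨?_, fun c hc => ?_⟩, ?_⟩
  · rintro _ ⟨n, rfl⟩ _ ⟨m, rfl⟩
    exact ⟨_, ⟨max n m, rfl⟩, fun h hh => by simpa using hanti (le_max_left n m) h hh,
      fun h hh => by simpa using hanti (le_max_right n m) h hh⟩
  · rintro _ ⟨n, rfl⟩ h hh
    have := hw' h hh
    simp only [ZeroMemClass.coe_zero, LinearMap.zero_apply, SetLike.val_smul,
      LinearMap.smul_apply, smul_eq_mul]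
    positivity
  · intro h hh
    have hlim := tendsto_one_div_add_atTop_nhds_zero_nat.mul_const ((w : E →ₗ[ℝ] ℝ) h)
    rw [zero_mul] at hlim
    exact ge_of_tendsto' hlim fun n => by simpa using hc ⟨n, rfl⟩ h hh
  · rintro _ ⟨n, rfl⟩
    obtain ⟨α₀, hα₀⟩ := hπ n
    refine ⟨α₀, fun α hα => ⟨fun h hh => ?_, fun h hh => ?_⟩⟩ <;>
    · have h₁ := (hy α).1 h hh
      have h₂ := (hy α).2 h hh
      have h₃ := hanti (hα₀ α hα) h hh
      simp only [NegMemClass.coe_neg, SetLike.val_smul, LinearMap.neg_apply, LinearMap.smul_apply,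
        smul_eq_mul, AddSubgroupClass.coe_sub, ZeroMemClass.coe_zero, zero_sub, zero_add,
        ge_iff_le] at h₁ h₂ ⊢
      linarith

end Functionals

section LatticeGroup

variable {X : Type*} [Lattice X] [AddCommGroup X] [CovariantClass X X (· + ·) (· ≤ ·)]
  {κ : Type*} [Preorder κ]

instance isOrderedAddMonoid_of_covariantClass : IsOrderedAddMonoid X where
  add_le_add_left _ _ h c := add_le_add_left h c

theorem posPart_add_le (a b : X) : (a + b)⁺ ≤ a⁺ + b⁺ :=
  sup_le (add_le_add (le_posPart a) (le_posPart b))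
    (add_nonneg (posPart_nonneg a) (posPart_nonneg b))

def eventualAbsBounds (x : κ → X) : Set X := {u | ∃ α₀, ∀ α, α₀ ≤ α → |x α| ≤ u}

theorem oConvTo_zero_of_isGLB_eventualAbsBounds [Module ℝ X] [IsDirected κ (· ≤ ·)]
    {x : κ → X} (hne : (eventualAbsBounds x).Nonempty) (hglb : IsGLB (eventualAbsBounds x) 0) :
    OConvTo x 0 := by
  refine ⟨eventualAbsBounds x, hne, ?_, hglb, ?_⟩
  · rintro u ⟨α, hu⟩ v ⟨β, hv⟩
    obtain ⟨γ, hαγ, hβγ⟩ := directed_of (· ≤ ·) α β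
    exact ⟨u ⊓ v, ⟨γ, fun δ hδ => le_inf (hu δ (hαγ.trans hδ)) (hv δ (hβγ.trans hδ))⟩,
      inf_le_left, inf_le_right⟩
  · rintro u ⟨α₀, hu⟩
    refine ⟨α₀, fun α hα => ?_⟩
    rw [zero_sub, zero_add]
    exact ⟨neg_le.mp (abs_le'.mp (hu α hα)).2, (abs_le'.mp (hu α hα)).1⟩

-- If `u` bounds the tail of `|x|` from `α₀` on, so does `u - W`: by `z ≤ u`,
-- `W + |x α| ≤ (z - |x α|)⁺ + |x α| = z ⊔ |x α| ≤ u`. Thus `n • W ≤ u` for all `n`.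
theorem eq_zero_of_le_posPart_sub_abs (harch : IsArch X) {x : κ → X} {z u W : X} {α₀ : κ}
    (hz : ∀ v ∈ eventualAbsBounds x, z ≤ v) (hu : ∀ α, α₀ ≤ α → |x α| ≤ u)
    (hW0 : 0 ≤ W) (hW : ∀ α, α₀ ≤ α → W ≤ (z - |x α|)⁺) : W = 0 := by
  have key : ∀ n : ℕ, ∀ α, α₀ ≤ α → |x α| ≤ u - n • W := by
    intro n
    induction n with
    | zero => simpa using hu
    | succ n ih =>
      intro α hα
      have hzu : z ≤ u - n • W := hz _ ⟨α₀, ih⟩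
      have : W + |x α| ≤ u - n • W := calc
        W + |x α| ≤ (z - |x α|)⁺ + |x α| := add_le_add_left (hW α hα) _
        _ = z ⊔ |x α| := by rw [sup_eq_add_posPart_sub, add_comm]
        _ ≤ u - n • W := sup_le hzu (ih α hα)
      rw [succ_nsmul, ← sub_sub]
      exact le_sub_iff_add_le'.mpr this
  exact harch W u hW0 fun n => sub_nonneg.mp ((abs_nonneg _).trans (key n α₀ le_rfl))

theorem isGLB_image_posPart_sub (harch : IsArch X) {x : κ → X} {z u : X} {α₀ : κ} {S : Set X}
    (hz : ∀ v ∈ eventualAbsBounds x, z ≤ v) (hu : ∀ α, α₀ ≤ α → |x α| ≤ u)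
    (hS : ∀ α, α₀ ≤ α → |x α| ∈ S) : IsGLB ((fun s => (z - s)⁺) '' S) 0 := by
  refine ⟨by rintro _ ⟨s, -, rfl⟩; exact posPart_nonneg _, fun W hW => ?_⟩
  have hW' : W⁺ = 0 := eq_zero_of_le_posPart_sub_abs harch hz hu (posPart_nonneg W)
    fun α hα => sup_le (hW ⟨_, hS α hα, rfl⟩) (posPart_nonneg _)
  exact hW' ▸ le_posPart W

end LatticeGroup

section VectorLattice

variable {X : Type*} [Lattice X] [AddCommGroup X] [CovariantClass X X (· + ·) (· ≤ ·)]
  [Module ℝ X]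

theorem obDual_apply_mono {f : obDual X} (hf : 0 ≤ f) {a b : X} (hab : a ≤ b) :
    (f : X →ₗ[ℝ] ℝ) a ≤ (f : X →ₗ[ℝ] ℝ) b := by
  simpa using subPre_nonneg_iff.mp hf _ (sub_nonneg.mpr hab)

theorem bddAbove_image_Icc (f : obDual X) (w : X) :
    BddAbove ((f : X →ₗ[ℝ] ℝ) '' Icc 0 w) := by
  obtain ⟨M, hM⟩ := f.2 w
  refine ⟨M, ?_⟩
  rintro _ ⟨u, ⟨hu0, huw⟩, rfl⟩
  exact (le_abs_self _).trans (hM u ((neg_nonpos.mpr (hu0.trans huw)).trans hu0) huw)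

structure IsConeSublinear (F : X → ℝ) : Prop where
  mono : ∀ a b : X, 0 ≤ a → a ≤ b → F a ≤ F b
  add_le : ∀ a b : X, 0 ≤ a → 0 ≤ b → F (a + b) ≤ F a + F b
  smul : ∀ c : ℝ, 0 < c → ∀ a : X, 0 ≤ a → F (c • a) = c * F a

theorem isConeSublinear_of_nonneg {h : obDual X} (hh : 0 ≤ h) :
    IsConeSublinear ((h : X →ₗ[ℝ] ℝ) : X → ℝ) where
  mono _ _ _ hab := obDual_apply_mono hh hab
  add_le a b _ _ := (map_add _ a b).le
  smul c _ a _ := map_smul _ c a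

/-- The Riesz–Kantorovich formula for `f⁺` on the positive cone. -/
noncomputable def supOnIcc (f : obDual X) (w : X) : ℝ := sSup ((f : X →ₗ[ℝ] ℝ) '' Icc 0 w)

theorem le_supOnIcc (f : obDual X) {u w : X} (hu0 : 0 ≤ u) (huw : u ≤ w) :
    (f : X →ₗ[ℝ] ℝ) u ≤ supOnIcc f w :=
  le_csSup (bddAbove_image_Icc f w) ⟨u, ⟨hu0, huw⟩, rfl⟩

variable [PosSMulMono ℝ X]

theorem isConeSublinear_supOnIcc (f : obDual X) : IsConeSublinear (supOnIcc f) where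
  mono a b ha hab := csSup_le_csSup (bddAbove_image_Icc f b)
    ((nonempty_Icc.mpr ha).image _) (image_mono (Icc_subset_Icc_right hab))
  add_le a b ha hb := by
    refine csSup_le ((nonempty_Icc.mpr (add_nonneg ha hb)).image _) ?_
    rintro _ ⟨u, ⟨hu0, hu⟩, rfl⟩
    have hsplit : u = u ⊓ a + (u - a)⁺ := by rw [inf_eq_sub_posPart_sub, sub_add_cancel]
    rw [hsplit, map_add]
    exact add_le_add (le_supOnIcc f (le_inf hu0 ha) inf_le_right)
      (le_supOnIcc f (posPart_nonneg _) (sup_le (sub_le_iff_le_add'.mpr hu) hb))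
  smul c hc a _ := by
    have hIcc : Icc 0 (c • a) = (c • ·) '' Icc 0 a := by
      simpa using ((OrderIso.smulRight hc (β := X)).image_Icc 0 a).symm
    rw [supOnIcc, supOnIcc, hIcc, ← smul_eq_mul, ← Real.sSup_smul_of_nonneg hc.le,
      ← Set.image_smul, Set.image_image, Set.image_image]
    simp only [map_smul, smul_eq_mul]

-- Hahn–Banach, extending `c • w ↦ c * F w⁺` below the sublinear functional `y ↦ F y⁺`.
theorem IsConeSublinear.exists_nonneg_le_apply_eq {F : X → ℝ} (hF : IsConeSublinear F)
    (w : X) : ∃ g : obDual X, 0 ≤ g ∧ (∀ y : X, 0 ≤ y → (g : X →ₗ[ℝ] ℝ) y ≤ F y) ∧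
      (g : X →ₗ[ℝ] ℝ) w = F w⁺ := by
  have hF0 : F 0 = 0 := by
    have := hF.smul 2 two_pos 0 le_rfl
    rw [smul_zero] at this
    linarith
  have hFnonneg : ∀ a : X, 0 ≤ a → 0 ≤ F a := fun a ha => hF0 ▸ hF.mono 0 a le_rfl ha
  set N : X → ℝ := fun y => F y⁺
  have N_hom : ∀ c : ℝ, 0 < c → ∀ y, N (c • y) = c * N y := fun c hc y => by
    simp only [N, posPart_smul_of_nonneg hc.le, hF.smul c hc _ (posPart_nonneg y)]
  have N_add : ∀ y z, N (y + z) ≤ N y + N z := fun y z =>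
    (hF.mono _ _ (posPart_nonneg _) (posPart_add_le y z)).trans
      (hF.add_le _ _ (posPart_nonneg y) (posPart_nonneg z))
  have hsingle : ∀ c : ℝ, c • w = 0 → c • N w = 0 := by
    intro c hc
    rcases smul_eq_zero.mp hc with rfl | rfl
    · exact zero_smul ℝ _
    · simp [N, hF0]
  obtain ⟨g, hgw, hgN⟩ := exists_extension_of_le_sublinear
    (LinearPMap.mkSpanSingleton' w (N w) hsingle) N N_hom N_add (by
      rintro ⟨v, hv⟩
      obtain ⟨c, rfl⟩ := Submodule.mem_span_singleton.mp hv
      rw [LinearPMap.mkSpanSingleton'_apply, RingHom.id_apply, smul_eq_mul]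
      rcases le_or_gt c 0 with hc | hc
      · exact (mul_nonpos_of_nonpos_of_nonneg hc (hFnonneg _ (posPart_nonneg w))).trans
          (hFnonneg _ (posPart_nonneg _))
      · exact (N_hom c hc w).ge)
  have hg_neg : ∀ y : X, -g y ≤ F y⁻ := fun y => by
    simpa [N, posPart_neg] using hgN (-y)
  have hg_mem : g ∈ obDual X := fun u => ⟨F u⁺, fun y hy₁ hy₂ => abs_le.mpr
    ⟨by
      have := hF.mono _ _ (posPart_nonneg _) (posPart_mono (neg_le.mp hy₁))
      rw [posPart_neg] at this
      linarith [hg_neg y],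
     (hgN y).trans (hF.mono _ _ (posPart_nonneg _) (posPart_mono hy₂))⟩⟩
  refine ⟨⟨g, hg_mem⟩, subPre_nonneg_iff.mpr fun y hy => ?_, fun y hy => ?_, ?_⟩
  · have := hg_neg y
    rw [negPart_of_nonneg hy, hF0] at this
    exact neg_nonpos.mp this
  · simpa [N, posPart_eq_self.mpr hy] using hgN y
  · exact (hgw ⟨w, Submodule.mem_span_singleton_self w⟩).trans
      (LinearPMap.mkSpanSingleton'_apply_self _ _ _ _)

theorem exists_le_apply_eq_posPart {h : obDual X} (hh : 0 ≤ h) (w : X) :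
    ∃ h' : obDual X, 0 ≤ h' ∧ h' ≤ h ∧ (h' : X →ₗ[ℝ] ℝ) w = (h : X →ₗ[ℝ] ℝ) w⁺ := by
  obtain ⟨h', hh', hle, hw⟩ := (isConeSublinear_of_nonneg hh).exists_nonneg_le_apply_eq w
  exact ⟨h', hh', subPre_le_iff.mpr hle, hw⟩

theorem exists_nonneg_apply_ge (f : obDual X) {z : X} (hz : 0 ≤ z) :
    ∃ g : obDual X, 0 ≤ g ∧ (f : X →ₗ[ℝ] ℝ) z ≤ (g : X →ₗ[ℝ] ℝ) z := by
  obtain ⟨g, hg, -, hgz⟩ := (isConeSublinear_supOnIcc f).exists_nonneg_le_apply_eq z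
  rw [posPart_eq_self.mpr hz] at hgz
  exact ⟨g, hg, hgz ▸ le_supOnIcc f hz le_rfl⟩

theorem eq_zero_of_forall_nonneg_apply_nonpos (hsep : SepPoints X) {z : X} (hz : 0 ≤ z)
    (hpos : ∀ g : obDual X, 0 ≤ g → (g : X →ₗ[ℝ] ℝ) z ≤ 0) : z = 0 := by
  by_contra hne
  obtain ⟨f, hf⟩ := hsep z hne
  obtain ⟨g₁, hg₁, hfg₁⟩ := exists_nonneg_apply_ge f hz
  obtain ⟨g₂, hg₂, hfg₂⟩ := exists_nonneg_apply_ge (-f) hz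
  have := hpos g₁ hg₁
  have := hpos g₂ hg₂
  simp only [NegMemClass.coe_neg, LinearMap.neg_apply] at hfg₂
  exact hf (by linarith)

end VectorLattice

section Bidual

variable {X : Type*} [Lattice X] [AddCommGroup X] [CovariantClass X X (· + ·) (· ≤ ·)]
  [Module ℝ X] [PosSMulMono ℝ X]

@[simp]
theorem hatEl_apply (y : X) (h : obDual X) :
    ((hatEl X (obDual X) y : obDual (obDual X)) : obDual X →ₗ[ℝ] ℝ) h = (h : X →ₗ[ℝ] ℝ) y :=
  rfl

theorem hatEl_sup_le {a b : X} {d : obDual (obDual X)}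
    (ha : hatEl X (obDual X) a ≤ d) (hb : hatEl X (obDual X) b ≤ d) :
    hatEl X (obDual X) (a ⊔ b) ≤ d := by
  intro h hh
  obtain ⟨h', hh', hle, hw⟩ := exists_le_apply_eq_posPart hh (b - a)
  have hsup : (h : X →ₗ[ℝ] ℝ) (a ⊔ b)
      = ((h - h' : obDual X) : X →ₗ[ℝ] ℝ) a + (h' : X →ₗ[ℝ] ℝ) b := by
    rw [sup_comm, sup_eq_add_posPart_sub, map_add, ← hw]
    simp only [AddSubgroupClass.coe_sub, LinearMap.sub_apply, map_sub]
    ring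
  calc (h : X →ₗ[ℝ] ℝ) (a ⊔ b)
      = ((h - h' : obDual X) : X →ₗ[ℝ] ℝ) a + (h' : X →ₗ[ℝ] ℝ) b := hsup
    _ ≤ (d : obDual X →ₗ[ℝ] ℝ) (h - h') + (d : obDual X →ₗ[ℝ] ℝ) h' :=
        add_le_add (ha _ (subPre_sub_nonneg.mpr hle)) (hb _ hh')
    _ = (d : obDual X →ₗ[ℝ] ℝ) h := by rw [← map_add]; congr 1; exact sub_add_cancel h h'

theorem hatEl_abs_le {y : X} {d : obDual (obDual X)}
    (hy : -d ≤ hatEl X (obDual X) y ∧ hatEl X (obDual X) y ≤ d) :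
    hatEl X (obDual X) |y| ≤ d := by
  refine hatEl_sup_le hy.2 fun h hh => ?_
  have := hy.1 h hh
  simp only [NegMemClass.coe_neg, LinearMap.neg_apply, hatEl_apply] at this
  simpa using neg_le.mp this

theorem hatEl_le_of_isGLB_image_posPart_sub (hreg : HatRegular X) {d : obDual (obDual X)}
    {z : X} (hne : {s | hatEl X (obDual X) s ≤ d}.Nonempty)
    (hglb : IsGLB ((fun s => (z - s)⁺) '' {s | hatEl X (obDual X) s ≤ d}) 0) :
    hatEl X (obDual X) z ≤ d := by
  have hdir : DirectedOn (· ≥ ·) ((fun s => (z - s)⁺) '' {s | hatEl X (obDual X) s ≤ d}) := by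
    rintro _ ⟨s, hs, rfl⟩ _ ⟨t, ht, rfl⟩
    exact ⟨_, ⟨s ⊔ t, hatEl_sup_le hs ht, rfl⟩,
      posPart_mono (sub_le_sub_left le_sup_left z), posPart_mono (sub_le_sub_left le_sup_right z)⟩
  have hlb : hatEl X (obDual X) z - d ∈ lowerBounds
      (hatEl X (obDual X) '' ((fun s => (z - s)⁺) '' {s | hatEl X (obDual X) s ≤ d})) := by
    rintro _ ⟨_, ⟨s, hs, rfl⟩, rfl⟩ h hh
    have hs' : (h : X →ₗ[ℝ] ℝ) s ≤ _ := hs h hh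
    have hz := obDual_apply_mono hh (le_posPart (z - s))
    simp only [map_sub, AddSubgroupClass.coe_sub, LinearMap.sub_apply, hatEl_apply] at hz ⊢
    linarith
  intro h hh
  have := (hreg _ (hne.image _) hdir hglb).2 hlb h hh
  simp only [AddSubgroupClass.coe_sub, LinearMap.sub_apply, ZeroMemClass.coe_zero,
    LinearMap.zero_apply, hatEl_apply] at this ⊢
  linarith

end Bidual

section Forward

variable {X : Type*} [Lattice X] [AddCommGroup X] [CovariantClass X X (· + ·) (· ≤ ·)]
  [Module ℝ X] [PosSMulMono ℝ X] {κ : Type*} [Preorder κ]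

theorem HasBProp.exists_abs_le (hb : HasBProp X) {x : κ → X} {d : obDual (obDual X)} {α₀ : κ}
    (hd : ∀ α, α₀ ≤ α → -d ≤ hatEl X (obDual X) (x α) ∧ hatEl X (obDual X) (x α) ≤ d) :
    ∃ u, ∀ α, α₀ ≤ α → |x α| ≤ u := by
  obtain ⟨b, t, hbt⟩ := hb (x '' Ici α₀) ⟨-d, d, by rintro _ ⟨α, hα, rfl⟩; exact hd α hα⟩
  refine ⟨t ⊔ -b, fun α hα => ?_⟩
  obtain ⟨hb, ht⟩ := hbt _ ⟨α, hα, rfl⟩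
  exact abs_le'.mpr ⟨ht.trans le_sup_left, (neg_le_neg hb).trans le_sup_right⟩

theorem oConvTo_zero_of_oConvTo_hatEl (harch : IsArch X) (hsep : SepPoints X)
    (hreg : HatRegular X) (hb : HasBProp X) [IsDirected κ (· ≤ ·)] {x : κ → X}
    (hx : OConvTo (fun α => hatEl X (obDual X) (x α)) 0) : OConvTo x 0 := by
  obtain ⟨D, ⟨d₁, hd₁⟩, -, hDglb, hD⟩ := hx
  have htail : ∀ d ∈ D, ∃ α₀, ∀ α, α₀ ≤ α →
      -d ≤ hatEl X (obDual X) (x α) ∧ hatEl X (obDual X) (x α) ≤ d := by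
    intro d hd
    obtain ⟨α₀, hα₀⟩ := hD d hd
    exact ⟨α₀, fun α hα => ⟨(zero_sub d).symm.trans_le (hα₀ α hα).1,
      (hα₀ α hα).2.trans_eq (zero_add d)⟩⟩
  refine oConvTo_zero_of_isGLB_eventualAbsBounds ?_
    ⟨fun u ⟨α, hu⟩ => (abs_nonneg _).trans (hu α le_rfl), fun v hv => ?_⟩
  · obtain ⟨α₀, hα₀⟩ := htail d₁ hd₁
    obtain ⟨u, hu⟩ := hb.exists_abs_le hα₀
    exact ⟨u, α₀, hu⟩
  have hz : ∀ u ∈ eventualAbsBounds x, v⁺ ≤ u := fun u hu =>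
    sup_le (hv hu) ((abs_nonneg _).trans (hu.choose_spec _ le_rfl))
  have hzD : hatEl X (obDual X) v⁺ ∈ lowerBounds D := by
    intro d hd
    obtain ⟨α₀, hα₀⟩ := htail d hd
    obtain ⟨u, hu⟩ := hb.exists_abs_le hα₀
    exact hatEl_le_of_isGLB_image_posPart_sub hreg ⟨_, hatEl_abs_le (hα₀ α₀ le_rfl)⟩
      (isGLB_image_posPart_sub harch hz hu fun α hα => hatEl_abs_le (hα₀ α hα))
  have hv0 : v⁺ = 0 := eq_zero_of_forall_nonneg_apply_nonpos hsep (posPart_nonneg v)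
    fun g hg => by simpa using hDglb.2 hzD g hg
  exact hv0 ▸ le_posPart v

end Forward

section Reverse

instance isDirected_nat_lex {ι : Type*} [Preorder ι] : IsDirected (ℕ ×ₗ ι) (· ≤ ·) where
  directed p q := ⟨toLex (max (ofLex p).1 (ofLex q).1 + 1, (ofLex p).2),
    Prod.Lex.le_iff.mpr (Or.inl (by simp only [ofLex_toLex]; omega)),
    Prod.Lex.le_iff.mpr (Or.inl (by simp only [ofLex_toLex]; omega))⟩

variable {X : Type u} [Lattice X] [AddCommGroup X] [CovariantClass X X (· + ·) (· ≤ ·)]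
  [Module ℝ X] [PosSMulMono ℝ X]

theorem hasBProp_of_forall_oConvTo_hatEl
    (hconv : ∀ (κ : Type u) [Preorder κ] [Nonempty κ] [IsDirected κ (· ≤ ·)] (x : κ → X),
      OConvTo (fun α => hatEl X (obDual X) (x α)) 0 → OConvTo x 0) :
    HasBProp X := by
  rintro A ⟨b, t, hbt⟩
  rcases A.eq_empty_or_nonempty with rfl | ⟨a₀, ha₀⟩
  · exact ⟨0, 0, by simp⟩
  have : Nonempty A := ⟨⟨a₀, ha₀⟩⟩
  set x : ℕ ×ₗ A → X := fun p => (((ofLex p).1 : ℝ) + 1)⁻¹ • ((ofLex p).2 - a₀) with hx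
  have hxhat : OConvTo (fun α => hatEl X (obDual X) (x α)) 0 := by
    refine oConvTo_zero_of_le_inv_succ_smul (E := obDual X) (Y := obDual (obDual X))
      (w := t - b) ?_ (fun p : ℕ ×ₗ A => (ofLex p).1) ?_ fun p => ⟨fun h hh => ?_, fun h hh => ?_⟩
    · exact subPre_sub_nonneg.mpr ((hbt a₀ ha₀).1.trans (hbt a₀ ha₀).2)
    · exact fun n => ⟨toLex (n, ⟨a₀, ha₀⟩), fun α hα => Prod.Lex.monotone_fst_ofLex hα⟩
    all_goals
      have hb₀ := (hbt a₀ ha₀).1 h hh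
      have ht₀ := (hbt a₀ ha₀).2 h hh
      have hb := (hbt _ (ofLex p).2.2).1 h hh
      have ht := (hbt _ (ofLex p).2.2).2 h hh
      have hε : (0 : ℝ) ≤ (((ofLex p).1 : ℝ) + 1)⁻¹ := by positivity
      simp only [hatEl_apply, hx, NegMemClass.coe_neg, SetLike.val_smul, AddSubgroupClass.coe_sub,
        LinearMap.neg_apply, LinearMap.smul_apply, LinearMap.sub_apply, smul_eq_mul, map_smul,
        map_sub, ge_iff_le] at hb₀ ht₀ hb ht ⊢
      nlinarith
  obtain ⟨D, ⟨d, hd⟩, -, -, hD⟩ := hconv _ x hxhat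
  obtain ⟨α₀, hα₀⟩ := hD d hd
  set c : ℝ := (((ofLex α₀).1 + 1 : ℕ) : ℝ) + 1 with hc
  have hc0 : 0 < c := by positivity
  refine ⟨a₀ - c • d, a₀ + c • d, fun a ha => ?_⟩
  have := hα₀ (toLex ((ofLex α₀).1 + 1, ⟨a, ha⟩)) (Prod.Lex.le_iff.mpr (Or.inl (by simp)))
  rw [zero_sub, zero_add] at this
  obtain ⟨hl, hr⟩ := this
  simp only [hx, ofLex_toLex] at hl hr
  rw [← hc, le_inv_smul_iff_of_pos hc0, smul_neg] at hl
  rw [← hc, inv_smul_le_iff_of_pos hc0] at hr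
  exact ⟨sub_le_iff_le_add.mpr (by simpa using hl), sub_le_iff_le_add'.mp hr⟩

end Reverse

/-- For a regular Riesz dual system `⟨X, X~⟩`: `X` has the `b`-property iff the
order convergence in `X` agrees with the order convergence of canonical images
in `X~~`. -/
theorem statement14 {X : Type u} [Lattice X] [AddCommGroup X]
    [CovariantClass X X (· + ·) (· ≤ ·)] [Module ℝ X] [PosSMulMono ℝ X]
    (harch : IsArch X)
    (hsep : SepPoints X) (hreg : HatRegular X) :
    HasBProp X ↔
      ∀ (κ : Type u) [Preorder κ] [Nonempty κ] [IsDirected κ (· ≤ ·)]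
        (x : κ → X),
        OConvTo (fun α => hatEl X (obDual X) (x α)) 0 → OConvTo x 0 :=
  ⟨fun hb _ _ _ _ _ hx => oConvTo_zero_of_oConvTo_hatEl harch hsep hreg hb hx,
    hasBProp_of_forall_oConvTo_hatEl⟩
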